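/- arXiv:2108.09116 — 7 statements merged into one kernel-verified Lean document; each statement's English description precedes it below -/
import Mathlib

section
/- Let N, M be natural numbers, let β > 0, and let F be a nonempty set of matrices in ℝ^{N×M} all of whose entries are bounded in absolute value by β. A matrix X̂ ∈ F minimizes the number of nonzero rows over F if and only if there exists b̂ ∈ {0,1}^N with −β b̂_i ≤ X̂_{ij} ≤ β b̂_i for all i, j such that the pair (X̂, b̂) minimizes ∑_{i=1}^N b_i over all pairs (X, b) with X ∈ F, b ∈ {0,1}^N, and −β b_i ≤ X_{ij} ≤ β b_i for all i, j. -/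
open scoped Classical

/-!
Every `b` satisfying the big-`β` constraints for `X` dominates the indicator of the nonzero rows
of `X`, and when the entries of `X` are bounded by `β` that indicator satisfies the constraints
itself. Hence the least value of `∑ i, b i` over feasible `b` is the group sparsity of `X`, and
both minimization problems compare the same numbers.
-/

open Finset

namespace Matrix

variable {m n : Type*}

def BigMFeasible (β : ℝ) (X : Matrix m n ℝ) (b : m → ℝ) : Prop :=
  (∀ i, b i = 0 ∨ b i = 1) ∧ ∀ i j, -(β * b i) ≤ X i j ∧ X i j ≤ β * b i

noncomputable def rowIndicator (X : Matrix m n ℝ) (i : m) : ℝ :=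
  if X i ≠ 0 then 1 else 0

theorem row_eq_zero_of_bigMFeasible {β : ℝ} {X : Matrix m n ℝ} {b : m → ℝ}
    (h : BigMFeasible β X b) {i : m} (hi : b i = 0) : X i = 0 := by
  funext j
  have hij := h.2 i j
  rw [hi, mul_zero, neg_zero] at hij
  exact le_antisymm hij.2 hij.1

theorem card_nonzero_rows_le_sum [Fintype m] {β : ℝ} {X : Matrix m n ℝ} {b : m → ℝ}
    (h : BigMFeasible β X b) : (#{i | X i ≠ 0} : ℝ) ≤ ∑ i, b i := by
  rw [← sum_boole]
  refine sum_le_sum fun i _ => ?_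
  rcases h.1 i with hi | hi
  · simp [row_eq_zero_of_bigMFeasible h hi, hi]
  · rw [hi]
    split_ifs <;> norm_num

theorem bigMFeasible_rowIndicator {β : ℝ} {X : Matrix m n ℝ} (hX : ∀ i j, |X i j| ≤ β) :
    BigMFeasible β X (rowIndicator X) := by
  refine ⟨fun i => by unfold rowIndicator; split_ifs <;> simp, fun i j => ?_⟩
  unfold rowIndicator
  split_ifs with hi
  · rw [mul_one]
    exact abs_le.mp (hX i j)
  · simp [not_not.mp hi]

theorem sum_rowIndicator [Fintype m] (X : Matrix m n ℝ) :
    ∑ i, rowIndicator X i = #{i | X i ≠ 0} := by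
  simp only [rowIndicator, sum_boole]

end Matrix

open Matrix

theorem group_sparsity_minimizer_iff_mip_minimizer_general (N M : ℕ) (β : ℝ)
    (F : Set (Matrix (Fin N) (Fin M) ℝ))
    (hbound : ∀ X ∈ F, ∀ i j, |X i j| ≤ β)
    (Xhat : Matrix (Fin N) (Fin M) ℝ) (hXhat : Xhat ∈ F) :
    (∀ X ∈ F, (Finset.univ.filter (fun i => Xhat i ≠ 0)).card ≤
        (Finset.univ.filter (fun i => X i ≠ 0)).card) ↔
      ∃ bhat : Fin N → ℝ, (∀ i, bhat i = 0 ∨ bhat i = 1) ∧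
        (∀ i j, -(β * bhat i) ≤ Xhat i j ∧ Xhat i j ≤ β * bhat i) ∧
        (∀ X ∈ F, ∀ b : Fin N → ℝ, (∀ i, b i = 0 ∨ b i = 1) →
          (∀ i j, -(β * b i) ≤ X i j ∧ X i j ≤ β * b i) →
          (∑ i, bhat i) ≤ ∑ i, b i) := by
  constructor
  · intro hmin
    obtain ⟨hbin, hbox⟩ := bigMFeasible_rowIndicator (hbound Xhat hXhat)
    refine ⟨rowIndicator Xhat, hbin, hbox, fun X hX b hb hXb => ?_⟩
    calc ∑ i, rowIndicator Xhat i = #{i | Xhat i ≠ 0} := sum_rowIndicator Xhat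
      _ ≤ #{i | X i ≠ 0} := by exact_mod_cast hmin X hX
      _ ≤ ∑ i, b i := card_nonzero_rows_le_sum ⟨hb, hXb⟩
  · rintro ⟨bhat, hbin, hbox, hopt⟩ X hX
    obtain ⟨hb, hXb⟩ := bigMFeasible_rowIndicator (hbound X hX)
    have hcard : (#{i | Xhat i ≠ 0} : ℝ) ≤ #{i | X i ≠ 0} :=
      calc (#{i | Xhat i ≠ 0} : ℝ) ≤ ∑ i, bhat i := card_nonzero_rows_le_sum ⟨hbin, hbox⟩
        _ ≤ ∑ i, rowIndicator X i := hopt X hX _ hb hXb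
        _ = #{i | X i ≠ 0} := sum_rowIndicator X
    exact_mod_cast hcard

/-- Minimizer-correspondence part of Lemma 2 of the paper: `X̂ ∈ F` minimizes the number of
nonzero rows over `F` iff there is a binary vector `b̂` satisfying the Big-β constraints for
`X̂` such that the pair `(X̂, b̂)` minimizes `∑ i, b i` over all feasible pairs `(X, b)`. -/
theorem group_sparsity_minimizer_iff_mip_minimizer (N M : ℕ) (β : ℝ) (hβ : 0 < β)
    (F : Set (Matrix (Fin N) (Fin M) ℝ)) (hF : F.Nonempty)
    (hbound : ∀ X ∈ F, ∀ i j, |X i j| ≤ β)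
    (Xhat : Matrix (Fin N) (Fin M) ℝ) (hXhat : Xhat ∈ F) :
    (∀ X ∈ F, (Finset.univ.filter (fun i => Xhat i ≠ 0)).card ≤
        (Finset.univ.filter (fun i => X i ≠ 0)).card) ↔
      ∃ bhat : Fin N → ℝ, (∀ i, bhat i = 0 ∨ bhat i = 1) ∧
        (∀ i j, -(β * bhat i) ≤ Xhat i j ∧ Xhat i j ≤ β * bhat i) ∧
        (∀ X ∈ F, ∀ b : Fin N → ℝ, (∀ i, b i = 0 ∨ b i = 1) →
          (∀ i j, -(β * b i) ≤ X i j ∧ X i j ≤ β * b i) →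
          (∑ i, bhat i) ≤ ∑ i, b i) :=
  group_sparsity_minimizer_iff_mip_minimizer_general N M β F hbound Xhat hXhat
end

section
/- Let L, M, N be natural numbers, let Y ∈ ℝ^{L×M}, S ∈ ℝ^{L×N}, let ε ≥ 0 and β > 0. Then the optimal value of problem P1 — minimize the number of nonzero rows of X over all X ∈ ℝ^{N×M} satisfying ‖Y − S X‖_F ≤ ε and |X_{ij}| ≤ β for all i,j — equals the optimal value of the mixed-integer program P4 — minimize ∑_{i=1}^N b_i over all X ∈ ℝ^{N×M}, b ∈ {0,1}^N, and nonnegative reals ε_1,…,ε_M satisfying (X^i)ᵀ Sᵀ S X^i − 2(Y^i)ᵀ S X^i ≤ ε_i² − ‖Y^i‖_2² for every i ∈ {1,…,M}, ∑_{i=1}^M ε_i² = ε², and −β b_i ≤ X_{ij} ≤ β b_i for all i, j — provided both problems are feasible. -/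
open Matrix
open scoped Classical

/-!
For each column `j`, the quadratic constraint of P4 is `‖Yʲ - S Xʲ‖² ≤ ε_j²`, so together with
`∑ ε_j² = ε²` it recovers `‖Y - S X‖_F ≤ ε`; conversely, the residual of a P1-feasible `X` can be
padded to slacks `ε_j` with `∑ ε_j² = ε²` (when there is at least one column). Taking `b` to be
the indicator of the nonzero rows of `X`, the Big-β constraints become the box constraints and
`∑ b_i` is the group sparsity, while for an arbitrary P4 point `∑ b_i` only bounds it from above.
So each objective value of one problem is dominated by one of the other, and the infima agree.
-/

section DotProduct

variable {m n R : Type*} [Fintype m] [Fintype n] [CommRing R]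

theorem Matrix.sub_dotProduct_sub_self (y v : m → R) :
    (y - v) ⬝ᵥ (y - v) = y ⬝ᵥ y - 2 * (y ⬝ᵥ v) + v ⬝ᵥ v := by
  rw [sub_dotProduct, dotProduct_sub, dotProduct_sub, dotProduct_comm v y]
  ring

theorem Matrix.dotProduct_transpose_mul_self_mulVec (S : Matrix m n R) (x : n → R) :
    x ⬝ᵥ (Sᵀ * S) *ᵥ x = S *ᵥ x ⬝ᵥ S *ᵥ x := by
  rw [← mulVec_mulVec, dotProduct_transpose_mulVec]

theorem Matrix.quadratic_le_sub_dotProduct_self_iff [PartialOrder R] [IsOrderedAddMonoid R]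
    (S : Matrix m n R) (x : n → R) (y : m → R) (e : R) :
    x ⬝ᵥ (Sᵀ * S) *ᵥ x - 2 * (y ⬝ᵥ S *ᵥ x) ≤ e - y ⬝ᵥ y ↔
      (y - S *ᵥ x) ⬝ᵥ (y - S *ᵥ x) ≤ e := by
  rw [sub_dotProduct_sub_self, dotProduct_transpose_mul_self_mulVec, le_sub_iff_add_le]
  exact iff_of_eq (congrArg (· ≤ e) (by ring))

theorem Matrix.sum_sum_sq_eq_sum_col_dotProduct (A : Matrix m n R) :
    ∑ i, ∑ j, A i j ^ 2 = ∑ j, (fun i => A i j) ⬝ᵥ (fun i => A i j) := by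
  rw [Finset.sum_comm]
  simp only [dotProduct, sq]

end DotProduct

theorem Finset.sum_eq_card_ne_zero_of_binary {ι R : Type*} [Fintype ι] [NonAssocSemiring R]
    [DecidableEq R] {b : ι → R} (hb : ∀ i, b i = 0 ∨ b i = 1) :
    ∑ i, b i = (Finset.univ.filter fun i => b i ≠ 0).card := by
  rw [← Finset.sum_boole]
  refine Finset.sum_congr rfl fun i _ => ?_
  rcases hb i with h | h <;> simp [h]

theorem exists_sum_sq_eq_of_sum_le {m : Type*} [Fintype m] {r : m → ℝ} {E : ℝ}
    (hr : ∀ j, 0 ≤ r j) (hE : ∑ j, r j ≤ E) (hm : IsEmpty m → E = 0) :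
    ∃ e : m → ℝ, (∀ j, 0 ≤ e j) ∧ (∀ j, r j ≤ e j ^ 2) ∧ ∑ j, e j ^ 2 = E := by
  rcases isEmpty_or_nonempty m with hempty | hne
  · exact ⟨0, fun _ => le_rfl, isEmptyElim, by simp [hm hempty]⟩
  -- spread the slack `E - ∑ r` evenly over the coordinates
  set c := (E - ∑ j, r j) / Fintype.card m
  have hc : 0 ≤ c := div_nonneg (sub_nonneg.2 hE) (Nat.cast_nonneg _)
  have hsq (j : m) : √(r j + c) ^ 2 = r j + c := Real.sq_sqrt (add_nonneg (hr j) hc)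
  refine ⟨fun j => √(r j + c), fun _ => Real.sqrt_nonneg _, fun j => by simp [hsq, hc], ?_⟩
  simp only [hsq, Finset.sum_add_distrib, Finset.sum_const, Finset.card_univ, nsmul_eq_mul, c]
  field_simp
  ring

namespace BoundedGroupSparse

variable {l m n : Type*} [Fintype l] [Fintype m] [Fintype n]

noncomputable def groupSparsity (X : Matrix n m ℝ) : ℕ :=
  (Finset.univ.filter fun i => X i ≠ 0).card

structure P1Feasible (Y : Matrix l m ℝ) (S : Matrix l n ℝ) (ε β : ℝ) (X : Matrix n m ℝ) :
    Prop where
  residual_le : √(∑ i, ∑ j, ((Y - S * X) i j) ^ 2) ≤ ε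
  bounded : ∀ i j, |X i j| ≤ β

structure P4Feasible (Y : Matrix l m ℝ) (S : Matrix l n ℝ) (ε β : ℝ) (X : Matrix n m ℝ)
    (b : n → ℝ) (εv : m → ℝ) : Prop where
  binary : ∀ i, b i = 0 ∨ b i = 1
  slack_nonneg : ∀ j, 0 ≤ εv j
  sum_slack_sq : ∑ j, εv j ^ 2 = ε ^ 2
  quadratic : ∀ j, (fun k => X k j) ⬝ᵥ (Sᵀ * S) *ᵥ (fun k => X k j)
      - 2 * ((fun i => Y i j) ⬝ᵥ S *ᵥ fun k => X k j)
    ≤ εv j ^ 2 - (fun i => Y i j) ⬝ᵥ fun i => Y i j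
  bigM : ∀ i j, -(β * b i) ≤ X i j ∧ X i j ≤ β * b i

theorem sum_sum_sq_sub_mul_eq_sum_col (Y : Matrix l m ℝ) (S : Matrix l n ℝ) (X : Matrix n m ℝ) :
    ∑ i, ∑ j, ((Y - S * X) i j) ^ 2 =
      ∑ j, ((fun i => Y i j) - S *ᵥ fun k => X k j) ⬝ᵥ ((fun i => Y i j) - S *ᵥ fun k => X k j) :=
  Matrix.sum_sum_sq_eq_sum_col_dotProduct _

variable {Y : Matrix l m ℝ} {S : Matrix l n ℝ} {ε β : ℝ} {X : Matrix n m ℝ}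

theorem P1Feasible.exists_p4Feasible (h : P1Feasible Y S ε β X) (hm : IsEmpty m → ε = 0) :
    ∃ b εv, P4Feasible Y S ε β X b εv ∧ ∑ i, b i = groupSparsity X := by
  have hres := (Real.sqrt_le_iff.1 h.residual_le).2
  rw [sum_sum_sq_sub_mul_eq_sum_col] at hres
  obtain ⟨εv, hεv, hres_le, hsum⟩ := exists_sum_sq_eq_of_sum_le
    (fun j => Finset.sum_nonneg fun i _ => mul_self_nonneg _) hres (fun he => by simp [hm he])
  have hcard : ∑ i, (if X i ≠ 0 then (1 : ℝ) else 0) = groupSparsity X := by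
    rw [groupSparsity, Finset.card_filter]
    push_cast
    rfl
  refine ⟨fun i => if X i ≠ 0 then 1 else 0, εv,
    ⟨fun i => ?_, hεv, hsum, fun j => ?_, fun i j => ?_⟩, hcard⟩
  · split_ifs <;> simp
  · exact (Matrix.quadratic_le_sub_dotProduct_self_iff _ _ _ _).2 (hres_le j)
  · split_ifs with hX
    · simpa using abs_le.1 (h.bounded i j)
    · simp [congrFun (not_not.1 hX) j]

theorem P4Feasible.p1Feasible {b : n → ℝ} {εv : m → ℝ} (h : P4Feasible Y S ε β X b εv)
    (hε : 0 ≤ ε) (hβ : 0 ≤ β) : P1Feasible Y S ε β X where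
  residual_le := by
    rw [Real.sqrt_le_left hε, sum_sum_sq_sub_mul_eq_sum_col, ← h.sum_slack_sq]
    exact Finset.sum_le_sum fun j _ =>
      (Matrix.quadratic_le_sub_dotProduct_self_iff _ _ _ _).1 (h.quadratic j)
  bounded i j := by
    have hb : β * b i ≤ β := by rcases h.binary i with hb | hb <;> simp [hb, hβ]
    exact abs_le.2 ⟨by linarith [(h.bigM i j).1], by linarith [(h.bigM i j).2]⟩

theorem P4Feasible.groupSparsity_le {b : n → ℝ} {εv : m → ℝ} (h : P4Feasible Y S ε β X b εv) :
    (groupSparsity X : ℝ) ≤ ∑ i, b i := by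
  rw [Finset.sum_eq_card_ne_zero_of_binary h.binary]
  refine Nat.cast_le.2 (Finset.card_le_card fun i => ?_)
  simp only [Finset.mem_filter, Finset.mem_univ, true_and]
  refine mt fun hb => funext fun j => ?_
  have := h.bigM i j
  rw [hb, mul_zero, neg_zero] at this
  exact le_antisymm this.2 this.1

end BoundedGroupSparse

open BoundedGroupSparse in
theorem P1_optval_eq_P4_optval_general (L M N : ℕ)
    (Y : Matrix (Fin L) (Fin M) ℝ) (S : Matrix (Fin L) (Fin N) ℝ)
    (ε β : ℝ) (hε : 0 ≤ ε) (hβ : 0 < β)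
    (hfeas4 : ∃ (X : Matrix (Fin N) (Fin M) ℝ) (b : Fin N → ℝ) (εv : Fin M → ℝ),
      (∀ i, b i = 0 ∨ b i = 1) ∧ (∀ i, 0 ≤ εv i) ∧ (∑ i, (εv i) ^ 2) = ε ^ 2 ∧
      (∀ i : Fin M,
        (fun k => X k i) ⬝ᵥ ((Sᵀ * S).mulVec fun k => X k i)
            - 2 * ((fun l => Y l i) ⬝ᵥ (S.mulVec fun k => X k i))
          ≤ (εv i) ^ 2 - (fun l => Y l i) ⬝ᵥ (fun l => Y l i)) ∧
      (∀ i j, -(β * b i) ≤ X i j ∧ X i j ≤ β * b i)) :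
    sInf {k : ℕ | ∃ X : Matrix (Fin N) (Fin M) ℝ,
        (Real.sqrt (∑ l, ∑ j, ((Y - S * X) l j) ^ 2) ≤ ε ∧ ∀ i j, |X i j| ≤ β) ∧
        (Finset.univ.filter (fun i => X i ≠ 0)).card = k} =
    sInf {k : ℕ | ∃ (X : Matrix (Fin N) (Fin M) ℝ) (b : Fin N → ℝ) (εv : Fin M → ℝ),
        (∀ i, b i = 0 ∨ b i = 1) ∧ (∀ i, 0 ≤ εv i) ∧ (∑ i, (εv i) ^ 2) = ε ^ 2 ∧
        (∀ i : Fin M,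
          (fun k => X k i) ⬝ᵥ ((Sᵀ * S).mulVec fun k => X k i)
              - 2 * ((fun l => Y l i) ⬝ᵥ (S.mulVec fun k => X k i))
            ≤ (εv i) ^ 2 - (fun l => Y l i) ⬝ᵥ (fun l => Y l i)) ∧
        (∀ i j, -(β * b i) ≤ X i j ∧ X i j ≤ β * b i) ∧
        (∑ i, b i) = (k : ℝ)} := by
  have hM : IsEmpty (Fin M) → ε = 0 := fun _ => by
    obtain ⟨-, -, εv, -, -, hsum, -⟩ := hfeas4
    simpa [eq_comm (a := (0 : ℝ))] using hsum
  apply csInf_eq_csInf_of_forall_exists_le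
  · rintro _ ⟨X, ⟨hres, habs⟩, rfl⟩
    obtain ⟨b, εv, ⟨hb, hεv, hsum, hquad, hbig⟩, hk⟩ :=
      P1Feasible.exists_p4Feasible ⟨hres, habs⟩ hM
    exact ⟨_, ⟨X, b, εv, hb, hεv, hsum, hquad, hbig, hk⟩, le_rfl⟩
  · rintro k ⟨X, b, εv, hb, hεv, hsum, hquad, hbig, hk⟩
    have h : P4Feasible Y S ε β X b εv := ⟨hb, hεv, hsum, hquad, hbig⟩
    obtain ⟨hres, habs⟩ := h.p1Feasible hε hβ.le
    exact ⟨_, ⟨X, ⟨hres, habs⟩, rfl⟩, by exact_mod_cast hk ▸ h.groupSparsity_le⟩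

/-- Main reformulation result of Section III of the paper: provided both problems are
feasible, the optimal value of problem P1 (minimize the number of nonzero rows of `X`
subject to `‖Y - S X‖_F ≤ ε` and `|X i j| ≤ β`) equals the optimal value of the MIQCP P4
(minimize `∑ i, b i` over `X`, binary `b`, and nonnegative `ε_1, …, ε_M` subject to the
column-wise quadratic constraints, `∑ i, ε_i² = ε²`, and the Big-β constraints). -/
theorem P1_optval_eq_P4_optval (L M N : ℕ)
    (Y : Matrix (Fin L) (Fin M) ℝ) (S : Matrix (Fin L) (Fin N) ℝ)
    (ε β : ℝ) (hε : 0 ≤ ε) (hβ : 0 < β)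
    (hfeas1 : ∃ X : Matrix (Fin N) (Fin M) ℝ,
      Real.sqrt (∑ l, ∑ j, ((Y - S * X) l j) ^ 2) ≤ ε ∧ ∀ i j, |X i j| ≤ β)
    (hfeas4 : ∃ (X : Matrix (Fin N) (Fin M) ℝ) (b : Fin N → ℝ) (εv : Fin M → ℝ),
      (∀ i, b i = 0 ∨ b i = 1) ∧ (∀ i, 0 ≤ εv i) ∧ (∑ i, (εv i) ^ 2) = ε ^ 2 ∧
      (∀ i : Fin M,
        (fun k => X k i) ⬝ᵥ ((Sᵀ * S).mulVec fun k => X k i)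
            - 2 * ((fun l => Y l i) ⬝ᵥ (S.mulVec fun k => X k i))
          ≤ (εv i) ^ 2 - (fun l => Y l i) ⬝ᵥ (fun l => Y l i)) ∧
      (∀ i j, -(β * b i) ≤ X i j ∧ X i j ≤ β * b i)) :
    sInf {k : ℕ | ∃ X : Matrix (Fin N) (Fin M) ℝ,
        (Real.sqrt (∑ l, ∑ j, ((Y - S * X) l j) ^ 2) ≤ ε ∧ ∀ i j, |X i j| ≤ β) ∧
        (Finset.univ.filter (fun i => X i ≠ 0)).card = k} =
    sInf {k : ℕ | ∃ (X : Matrix (Fin N) (Fin M) ℝ) (b : Fin N → ℝ) (εv : Fin M → ℝ),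
        (∀ i, b i = 0 ∨ b i = 1) ∧ (∀ i, 0 ≤ εv i) ∧ (∑ i, (εv i) ^ 2) = ε ^ 2 ∧
        (∀ i : Fin M,
          (fun k => X k i) ⬝ᵥ ((Sᵀ * S).mulVec fun k => X k i)
              - 2 * ((fun l => Y l i) ⬝ᵥ (S.mulVec fun k => X k i))
            ≤ (εv i) ^ 2 - (fun l => Y l i) ⬝ᵥ (fun l => Y l i)) ∧
        (∀ i j, -(β * b i) ≤ X i j ∧ X i j ≤ β * b i) ∧
        (∑ i, b i) = (k : ℝ)} :=
  P1_optval_eq_P4_optval_general L M N Y S ε β hε hβ hfeas4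
end

section
/- Let L, M, N be natural numbers, let S ∈ ℝ^{L×N}, and suppose that every set of at most L columns of S is linearly independent. Let X* ∈ ℝ^{N×M} and let I_K ⊆ {1,…,N} be exactly the set of indices of nonzero rows of X*, with |I_K| = K. Set Y = S X*. If I_l ⊆ {1,…,N} satisfies |I_l ∪ I_K| ≤ L and every column of Y lies in the column span of the columns of S indexed by I_l, then I_K ⊆ I_l. -/
/-!
If `i ∈ I_K \ I_l`, pick a column `j` of `X*` with `X*_{ij} ≠ 0`. Column `j` of `Y` is then
expanded over the columns of `S` indexed by `I_l ∪ I_K` in two ways: by `X*`, with nonzero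
`i`-th coefficient, and by the span hypothesis, with coefficients supported on `I_l`. These
columns are linearly independent since `|I_l ∪ I_K| ≤ L`, so the two expansions agree.
-/

open scoped Matrix

open Finsupp in
theorem LinearIndepOn.mem_supported_of_linearCombination_mem_span {R M ι : Type*} [Semiring R]
    [AddCommMonoid M] [Module R M] {v : ι → M} {s t : Set ι} (hv : LinearIndepOn R v (s ∪ t))
    {f : ι →₀ R} (hf : f ∈ supported R R t)
    (hspan : linearCombination R v f ∈ Submodule.span R (v '' s)) : f ∈ supported R R s := by
  obtain ⟨g, hg, hgf⟩ := (mem_span_image_iff_linearCombination R).mp hspan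
  obtain rfl : g = f := linearIndepOn_iffₛ.mp hv g (supported_mono Set.subset_union_left hg) f
    (supported_mono Set.subset_union_right hf) hgf
  exact hg

theorem Matrix.column_mul_eq_linearCombination {m n p R : Type*} [Fintype n] [CommSemiring R]
    (A : Matrix m n R) (B : Matrix n p R) (j : p) :
    (fun i => (A * B) i j) = Finsupp.linearCombination R Aᵀ
      ((Finsupp.linearEquivFunOnFinite R R n).symm fun k => B k j) := by
  refine Eq.trans ?_ (Finsupp.linearCombination_eq_fintype_linearCombination_apply R _ _).symm
  ext i
  change ∑ k, A i k * B k j = (∑ k, B k j • Aᵀ k) i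
  simp [Finset.sum_apply, mul_comm]

theorem support_containment_general (L M N : ℕ)
    (S : Matrix (Fin L) (Fin N) ℝ)
    (hindep : ∀ I : Finset (Fin N), I.card ≤ L →
      LinearIndependent ℝ (fun i : ↥I => S.transpose i.1))
    (Xstar : Matrix (Fin N) (Fin M) ℝ)
    (IK : Finset (Fin N)) (hIK : ∀ i, i ∈ IK ↔ Xstar i ≠ 0)
    (Y : Matrix (Fin L) (Fin M) ℝ) (hY : Y = S * Xstar)
    (Il : Finset (Fin N)) (hcard : (Il ∪ IK).card ≤ L)
    (hspan : ∀ j : Fin M, (fun l => Y l j) ∈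
      Submodule.span ℝ (Set.range fun i : ↥Il => S.transpose i.1)) :
    IK ⊆ Il := by
  intro i hi
  obtain ⟨j, hij⟩ : ∃ j, Xstar i j ≠ 0 := Function.ne_iff.mp ((hIK i).mp hi)
  set c := (Finsupp.linearEquivFunOnFinite ℝ ℝ (Fin N)).symm fun k => Xstar k j
  have hc : c ∈ Finsupp.supported ℝ ℝ ↑IK := fun k hk =>
    (hIK k).mpr fun hrow => Finsupp.mem_support_iff.mp hk (congrFun hrow j)
  have hindepUnion : LinearIndepOn ℝ Sᵀ ↑(Il ∪ IK) := hindep _ hcard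
  rw [Finset.coe_union] at hindepUnion
  have hcol : Finsupp.linearCombination ℝ Sᵀ c ∈ Submodule.span ℝ (Sᵀ '' ↑Il) := by
    rw [← Matrix.column_mul_eq_linearCombination, ← hY]
    exact Set.image_eq_range _ _ ▸ hspan j
  exact hindepUnion.mem_supported_of_linearCombination_mem_span hc hcol
    (Finsupp.mem_support_iff.mpr hij)

/-- Support-containment step in the proof of Lemma 3 of the paper: if every set of at most
`L` columns of `S` is linearly independent, `I_K` is exactly the set of nonzero rows of `X*`
with `|I_K| = K`, `Y = S X*`, and `I_l` satisfies `|I_l ∪ I_K| ≤ L` and every column of `Y`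
lies in the span of the columns of `S` indexed by `I_l`, then `I_K ⊆ I_l`. -/
theorem support_containment (L M N K : ℕ)
    (S : Matrix (Fin L) (Fin N) ℝ)
    (hindep : ∀ I : Finset (Fin N), I.card ≤ L →
      LinearIndependent ℝ (fun i : ↥I => S.transpose i.1))
    (Xstar : Matrix (Fin N) (Fin M) ℝ)
    (IK : Finset (Fin N)) (hIK : ∀ i, i ∈ IK ↔ Xstar i ≠ 0)
    (hIKcard : IK.card = K)
    (Y : Matrix (Fin L) (Fin M) ℝ) (hY : Y = S * Xstar)
    (Il : Finset (Fin N)) (hcard : (Il ∪ IK).card ≤ L)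
    (hspan : ∀ j : Fin M, (fun l => Y l j) ∈
      Submodule.span ℝ (Set.range fun i : ↥Il => S.transpose i.1)) :
    IK ⊆ Il :=
  support_containment_general L M N S hindep Xstar IK hIK Y hY Il hcard hspan
end

section
/- Let L, M, N, K be natural numbers with 1 ≤ L ≤ K and N > K. Let S ∈ ℝ^{L×N}, let X* ∈ ℝ^{N×M} have exactly K nonzero rows with support set I_K, and set Y = S X*. Let I_L ⊆ {1,…,N} be any index set with |I_L| = L such that I_K ⊄ I_L and the L×L submatrix S[:,I_L] is invertible. Define X ∈ ℝ^{N×M} by X[I_L,:] = S[:,I_L]^{-1} Y and X_i = 0 for all i ∉ I_L. Then S X = Y, X has at most L ≤ K nonzero rows, and X ≠ X*. In particular, X* is not the unique minimizer of the number of nonzero rows subject to S X = Y. -/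
open scoped Classical

/-!
Any `L` columns of `S` indexed by `I_L` with `S[:,I_L]` invertible already reach every `Y`:
padding `S[:,I_L]⁻¹ Y` with zero rows gives a solution of `S X = Y` supported in `I_L`, hence
with at most `L ≤ K` nonzero rows. Since `I_K ⊄ I_L`, some row of `X*` is nonzero where the
corresponding row of `X` vanishes, so `X ≠ X*`.
-/

namespace Matrix

variable {l m n o α : Type*} [Fintype l] [Fintype n]

theorem card_filter_row_ne_zero_le {X : Matrix n o α} [Zero α] {I : Finset n}
    (hX : ∀ i ∉ I, X i = 0) : (Finset.univ.filter fun i => X i ≠ 0).card ≤ I.card :=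
  Finset.card_le_card fun i hi => by
    by_contra hiI
    exact (Finset.mem_filter.mp hi).2 (hX i hiI)

theorem mul_eq_submatrix_mul_submatrix_of_row_eq_zero [NonUnitalNonAssocSemiring α]
    (S : Matrix m n α) {X : Matrix n o α} {I : Finset n} (e : l ≃ I)
    (hX : ∀ i ∉ I, X i = 0) :
    S * X = S.submatrix id (fun b => (e b : n)) * X.submatrix (fun b => (e b : n)) id := by
  ext a j
  calc (S * X) a j = ∑ i ∈ I, S a i * X i j :=
        (Finset.sum_subset (Finset.subset_univ I) fun i _ hi => by simp [hX i hi]).symm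
    _ = ∑ i : I, S a i * X i j := (Finset.sum_coe_sort I _).symm
    _ = ∑ b : l, S a (e b) * X (e b) j := (e.sum_comp fun i : I => S a i * X i j).symm

end Matrix

theorem ne_of_row_eq_zero_of_not_subset {n o α : Type*} [Zero α] {X X' : Matrix n o α}
    {I J : Finset n} (hX : ∀ i ∉ I, X i = 0) (hX' : ∀ i ∈ J, X' i ≠ 0) (hJI : ¬ J ⊆ I) :
    X ≠ X' := by
  obtain ⟨i, hiJ, hiI⟩ := Finset.not_subset.mp hJI
  rintro rfl
  exact hX' i hiJ (hX i hiI)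

theorem l0_min_fails_when_L_le_K_general (L M N K : ℕ) (hLK : L ≤ K)
    (S : Matrix (Fin L) (Fin N) ℝ)
    (Xstar : Matrix (Fin N) (Fin M) ℝ)
    (IK : Finset (Fin N)) (hIK : ∀ i, i ∈ IK ↔ Xstar i ≠ 0) (hIKcard : IK.card = K)
    (Y : Matrix (Fin L) (Fin M) ℝ)
    (IL : Finset (Fin N)) (hILcard : IL.card = L) (hnotsub : ¬ IK ⊆ IL)
    (e : Fin L ≃ ↥IL)
    (SL : Matrix (Fin L) (Fin L) ℝ) (hSL : SL = Matrix.of fun a b => S a (e b).1)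
    (hinv : IsUnit SL.det)
    (X : Matrix (Fin N) (Fin M) ℝ)
    (hXout : ∀ i ∉ IL, X i = 0)
    (hXin : ∀ (a : Fin L) (j : Fin M), X ((e a) : Fin N) j = (SL⁻¹ * Y) a j) :
    S * X = Y ∧
    (Finset.univ.filter (fun i => X i ≠ 0)).card ≤ L ∧
    X ≠ Xstar ∧
    ∃ Z : Matrix (Fin N) (Fin M) ℝ, Z ≠ Xstar ∧ S * Z = Y ∧
      (Finset.univ.filter (fun i => Z i ≠ 0)).card ≤
        (Finset.univ.filter (fun i => Xstar i ≠ 0)).card := by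
  have hSX : S * X = Y := by
    have hS : S.submatrix id (fun b => (e b : Fin N)) = SL := hSL ▸ rfl
    have hXL : X.submatrix (fun b => (e b : Fin N)) id = SL⁻¹ * Y := Matrix.ext hXin
    rw [S.mul_eq_submatrix_mul_submatrix_of_row_eq_zero e hXout, hS, hXL,
      Matrix.mul_nonsing_inv_cancel_left _ _ hinv]
  have hsupp : (Finset.univ.filter fun i => X i ≠ 0).card ≤ L :=
    hILcard ▸ Matrix.card_filter_row_ne_zero_le hXout
  have hne : X ≠ Xstar :=
    ne_of_row_eq_zero_of_not_subset hXout (fun i => (hIK i).mp) hnotsub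
  have hstar : Finset.univ.filter (fun i => Xstar i ≠ 0) = IK := by
    ext i
    simp [hIK i]
  refine ⟨hSX, hsupp, hne, X, hne, hSX, ?_⟩
  rw [hstar, hIKcard]
  exact hsupp.trans hLK

/-- Deterministic core of the negative direction of Lemma 3 of the paper: with pilot length
`L ≤ K`, picking an index set `I_L` of size `L` not containing the true support `I_K` with
invertible submatrix `S[:,I_L]`, the matrix `X` defined by `X[I_L,:] = S[:,I_L]⁻¹ Y` and
zero rows elsewhere satisfies `S X = Y`, has at most `L ≤ K` nonzero rows, and differs from
`X*`; in particular `X*` is not the unique minimizer of the number of nonzero rows subject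
to `S X = Y`. -/
theorem l0_min_fails_when_L_le_K (L M N K : ℕ) (hL : 1 ≤ L) (hLK : L ≤ K) (hKN : K < N)
    (S : Matrix (Fin L) (Fin N) ℝ)
    (Xstar : Matrix (Fin N) (Fin M) ℝ)
    (IK : Finset (Fin N)) (hIK : ∀ i, i ∈ IK ↔ Xstar i ≠ 0) (hIKcard : IK.card = K)
    (Y : Matrix (Fin L) (Fin M) ℝ) (hY : Y = S * Xstar)
    (IL : Finset (Fin N)) (hILcard : IL.card = L) (hnotsub : ¬ IK ⊆ IL)
    (e : Fin L ≃ ↥IL)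
    (SL : Matrix (Fin L) (Fin L) ℝ) (hSL : SL = Matrix.of fun a b => S a (e b).1)
    (hinv : IsUnit SL.det)
    (X : Matrix (Fin N) (Fin M) ℝ)
    (hXout : ∀ i ∉ IL, X i = 0)
    (hXin : ∀ (a : Fin L) (j : Fin M), X ((e a) : Fin N) j = (SL⁻¹ * Y) a j) :
    S * X = Y ∧
    (Finset.univ.filter (fun i => X i ≠ 0)).card ≤ L ∧
    X ≠ Xstar ∧
    ∃ Z : Matrix (Fin N) (Fin M) ℝ, Z ≠ Xstar ∧ S * Z = Y ∧
      (Finset.univ.filter (fun i => Z i ≠ 0)).card ≤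
        (Finset.univ.filter (fun i => Xstar i ≠ 0)).card :=
  l0_min_fails_when_L_le_K_general L M N K hLK S Xstar IK hIK hIKcard Y IL hILcard hnotsub e SL hSL
    hinv X hXout hXin
end

section
/- Let L, M, N, K be natural numbers with 1 ≤ L ≤ K < N, let X* ∈ ℝ^{N×M} have exactly K nonzero rows, and let S be a random L×N matrix with i.i.d. standard Gaussian entries. Then almost surely there exists X ∈ ℝ^{N×M} with X ≠ X*, S X = S X*, and X has at most K nonzero rows. In particular, almost surely X* cannot be recovered as the unique minimizer of the number of nonzero rows subject to S X = S X*. -/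
open MeasureTheory ProbabilityTheory
open scoped Classical

/-!
Let `A` be the row support of `X*` and `j ∉ A` (it exists since `K < N`). The `K + 1 > L`
columns of `S` indexed by `A ∪ {j}` are linearly dependent, so `S c = 0` for some nonzero `c`
supported there. If `c i ≠ 0` for some `i ∈ A`, then `X* - c (X*_i / c_i)` solves `S X = S X*`,
differs from `X*` and is supported in `(A ∪ {j}) \ {i}`. Otherwise `c` is a multiple of `e_j`,
so column `j` of `S` vanishes, in particular `S₀ⱼ = 0`, an event of Gaussian measure zero.
-/

namespace MeasureTheory.Measure

theorem pi_pi_setOf_apply_apply_eq_null {ι κ α : Type*} [Fintype ι] [Fintype κ]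
    [MeasurableSpace α] (μ : Measure α) [SigmaFinite μ] [NullSingletonClass μ]
    (i : ι) (j : κ) (a : α) :
    (Measure.pi fun _ : ι => Measure.pi fun _ : κ => μ) {S | S i j = a} = 0 :=
  Measure.pi_eval_preimage_null (fun _ => Measure.pi fun _ : κ => μ) <|
    Measure.pi_eval_preimage_null (i := j) (fun _ => μ) (measure_singleton a)

end MeasureTheory.Measure

namespace Matrix

variable {l m n p K : Type*}

/-- `X.rowSupport.card` is the group sparsity of `X`. -/
noncomputable def rowSupport [Fintype m] [Zero K] (X : Matrix m n K) : Finset m :=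
  Finset.univ.filter fun i => X i ≠ 0

@[simp]
theorem mem_rowSupport [Fintype m] [Zero K] {X : Matrix m n K} {i : m} :
    i ∈ X.rowSupport ↔ X i ≠ 0 := by
  simp [rowSupport]

variable [Field K]

theorem sub_vecMulVec_inv_smul_apply_self (X : Matrix n p K) {c : n → K} {i : n} (hc : c i ≠ 0) :
    (X - vecMulVec c ((c i)⁻¹ • X i)) i = 0 := by
  ext k
  simp [vecMulVec_apply, inv_mul_cancel_left₀ hc]

variable [Fintype n]

theorem exists_ne_zero_mulVec_eq_zero_of_card_lt [Fintype l] (S : Matrix l n K) (T : Finset n)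
    (hT : Fintype.card l < T.card) :
    ∃ c : n → K, c ≠ 0 ∧ (∀ i ∉ T, c i = 0) ∧ S *ᵥ c = 0 := by
  let f := S.mulVecLin ∘ₗ Function.ExtendByZero.linearMap K ((↑) : T → n)
  obtain ⟨v, hv, hv0⟩ := Submodule.exists_mem_ne_zero_of_ne_bot <|
    f.ker_ne_bot_of_finrank_lt (by simpa using hT)
  refine ⟨Function.extend ((↑) : T → n) v 0, fun h => hv0 ?_, fun i hi => ?_,
    LinearMap.mem_ker.mp hv⟩
  · ext i
    simpa [Subtype.val_injective.extend_apply] using congrFun h i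
  · exact Function.extend_apply' _ _ _ fun ⟨k, hk⟩ => hi (hk ▸ k.2)

theorem mul_sub_vecMulVec_of_mulVec_eq_zero {S : Matrix l n K} {c : n → K} (hc : S *ᵥ c = 0)
    (X : Matrix n p K) (r : p → K) : S * (X - vecMulVec c r) = S * X := by
  rw [Matrix.mul_sub, mul_vecMulVec, hc, zero_vecMulVec, sub_zero]

theorem rowSupport_sub_vecMulVec_subset {X : Matrix n p K} {c : n → K} {T : Finset n}
    (hX : X.rowSupport ⊆ T) (hc : ∀ i ∉ T, c i = 0) (r : p → K) :
    (X - vecMulVec c r).rowSupport ⊆ T := by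
  intro i hi
  by_contra hiT
  have hXi : X i = 0 := by simpa using mt (@hX i) hiT
  exact mem_rowSupport.mp hi (by ext k; simp [vecMulVec_apply, hXi, hc i hiT])

theorem exists_ne_mul_eq_mul_rowSupport_card_le [Fintype l] (S : Matrix l n K)
    (X : Matrix n p K) {j : n} (hj : j ∉ X.rowSupport) (hSj : S.col j ≠ 0)
    (hl : Fintype.card l ≤ X.rowSupport.card) :
    ∃ X' : Matrix n p K, X' ≠ X ∧ S * X' = S * X ∧ X'.rowSupport.card ≤ X.rowSupport.card := by
  set A := X.rowSupport
  obtain ⟨c, hc0, hcT, hSc⟩ := S.exists_ne_zero_mulVec_eq_zero_of_card_lt (insert j A)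
    (by rw [Finset.card_insert_of_notMem hj]; omega)
  by_cases hA : ∃ i ∈ A, c i ≠ 0
  · obtain ⟨i, hiA, hci⟩ := hA
    have hrow := X.sub_vecMulVec_inv_smul_apply_self hci
    refine ⟨_, fun h => mem_rowSupport.mp hiA (h ▸ hrow),
      mul_sub_vecMulVec_of_mulVec_eq_zero hSc _ _, ?_⟩
    calc _ ≤ ((insert j A).erase i).card := by
          refine Finset.card_le_card fun k hk => Finset.mem_erase.mpr ⟨?_, ?_⟩
          · rintro rfl
            exact mem_rowSupport.mp hk hrow
          · exact rowSupport_sub_vecMulVec_subset (Finset.subset_insert j A) hcT _ hk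
      _ = A.card := by
          rw [Finset.card_erase_of_mem (Finset.mem_insert_of_mem hiA),
            Finset.card_insert_of_notMem hj, Nat.add_sub_cancel]
  · push Not at hA
    have hc : c = Pi.single j (c j) := by
      ext i
      by_cases hij : i = j
      · subst hij; simp
      · rw [Pi.single_eq_of_ne hij]
        by_cases hiA : i ∈ A
        · exact hA i hiA
        · exact hcT i (by simp [hij, hiA])
    have hcj : c j ≠ 0 := fun h => hc0 (by rw [hc, h, Pi.single_zero])
    rw [hc, mulVec_single, smul_eq_zero] at hSc
    exact absurd (hSc.resolve_left (by simpa using hcj)) hSj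

end Matrix

/-- Negative part of Lemma 3 of the paper: if `1 ≤ L ≤ K < N` and `X*` has exactly `K`
nonzero rows, then for a random Gaussian `L × N` matrix `S`, almost surely there exists
`X ≠ X*` with `S X = S X*` and at most `K` nonzero rows; hence almost surely `X*` is not
the unique minimizer of the number of nonzero rows subject to `S X = S X*`. -/
theorem gaussian_l0_recovery_fails_of_L_le_K (L M N K : ℕ)
    (hL : 1 ≤ L) (hLK : L ≤ K) (hKN : K < N)
    (Xstar : Matrix (Fin N) (Fin M) ℝ)
    (hXstar : (Finset.univ.filter (fun i => Xstar i ≠ 0)).card = K) :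
    (Measure.pi fun _ : Fin L => Measure.pi fun _ : Fin N => gaussianReal 0 1)
      {S : Matrix (Fin L) (Fin N) ℝ |
        ¬ ∃ X : Matrix (Fin N) (Fin M) ℝ, X ≠ Xstar ∧ S * X = S * Xstar ∧
            (Finset.univ.filter (fun i => X i ≠ 0)).card ≤ K} = 0 := by
  change Xstar.rowSupport.card = K at hXstar
  obtain ⟨j, -, hj⟩ := Finset.exists_mem_notMem_of_card_lt_card
    (s := Xstar.rowSupport) (t := Finset.univ) (by simpa [hXstar] using hKN)
  have := nullSingletonClass_gaussianReal (μ := 0) one_ne_zero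
  refine measure_mono_null (fun S hS => ?_)
    (Measure.pi_pi_setOf_apply_apply_eq_null (gaussianReal 0 1) (⟨0, hL⟩ : Fin L) j 0)
  by_contra hSj
  obtain ⟨X, hne, hmul, hcard⟩ := Matrix.exists_ne_mul_eq_mul_rowSupport_card_le S Xstar hj
    (fun h => hSj (congrFun h _)) (by simpa [hXstar])
  exact hS ⟨X, hne, hmul, hXstar ▸ hcard⟩
end

section
/- Let L, M, N, K be natural numbers with K + 1 ≤ L ≤ N, let X* ∈ ℝ^{N×M} be a fixed matrix with exactly K nonzero rows, and let S be a random L×N matrix with i.i.d. standard Gaussian entries. Then almost surely the following holds: every X ∈ ℝ^{N×M} with S X = S X* and at most K nonzero rows satisfies X = X*. In particular, almost surely X* is the unique minimizer of the number of nonzero rows subject to S X = S X*. -/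
/-!
A fixed subspace `W ⊆ ℝᴺ` of dimension at most `L` is almost surely mapped injectively by a
Gaussian `L × N` matrix `S`. Indeed, if the columns of `B` form a basis of `W`, injectivity of
`S B` is the non-vanishing of the polynomial `det ((S B)ᵀ (S B))` in the entries of `S`; this
polynomial is nonzero (look at `S = E Bᵀ` for a row embedding `E`), and the zero set of a nonzero
polynomial is null for a product of atomless measures (Fubini and induction on the number of
variables).

If `X` is supported on `T` with `|T| ≤ K`, then the `j`-th columns of `X` and `X*` both lie in
`span (X*ⱼ, eᵢ : i ∈ T)`, of dimension at most `K + 1 ≤ L`. There are finitely many such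
subspaces, so almost surely `S` is injective on all of them, and then `S X = S X*` forces
`X = X*`.
-/

open MeasureTheory ProbabilityTheory
open scoped Classical

namespace MvPolynomial

theorem ae_eval_ne_zero_fin : ∀ {n : ℕ} (μ : Fin n → Measure ℝ) [∀ i, SigmaFinite (μ i)]
    [∀ i, NullSingletonClass (μ i)] {p : MvPolynomial (Fin n) ℝ}, p ≠ 0 →
    ∀ᵐ x ∂Measure.pi μ, eval x p ≠ 0
  | 0, μ, _, _, p, hp => by
    obtain ⟨c, rfl⟩ := C_surjective (Fin 0) p
    exact ae_of_all _ fun x => by simpa using hp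
  | n + 1, μ, _, _, p, hp => by
    set q := finSuccEquiv ℝ n p
    obtain ⟨k, hk⟩ : ∃ k, q.coeff k ≠ 0 := by
      by_contra! h
      exact hp ((finSuccEquiv ℝ n).injective (Polynomial.ext fun k => by simp [q, h k]))
    set e := MeasurableEquiv.piFinSuccAbove (fun _ : Fin (n + 1) => ℝ) 0
    have he : ∀ z, e.symm z = Fin.cons z.1 z.2 := fun z => Fin.insertNth_zero' z.1 z.2
    have hmeas : MeasurableSet {z | eval (e.symm z) p ≠ 0} :=
      ((continuous_eval p).measurable.comp e.symm.measurable) (measurableSet_singleton 0).compl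
    rw [← (measurePreserving_piFinSuccAbove μ 0).symm.map_eq, e.symm.measurableEmbedding.ae_map_iff,
      Measure.ae_prod_iff_ae_ae hmeas, Measure.ae_ae_comm hmeas]
    filter_upwards [ae_eval_ne_zero_fin (fun i => μ (Fin.succAbove 0 i)) hk] with y hy
    have hqy : q.map (eval y) ≠ 0 := fun h => hy (by simpa using congrArg (·.coeff k) h)
    rw [ae_iff]
    refine measure_mono_null (fun x hx => ?_)
      ((Polynomial.finite_setOfPred_isRoot hqy).measure_zero _)
    simpa [he, eval_eq_eval_mv_eval'] using hx

theorem ae_eval_ne_zero {σ : Type*} [Fintype σ] (μ : σ → Measure ℝ) [∀ i, SigmaFinite (μ i)]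
    [∀ i, NullSingletonClass (μ i)] {p : MvPolynomial σ ℝ} (hp : p ≠ 0) :
    ∀ᵐ x ∂Measure.pi μ, eval x p ≠ 0 := by
  set e := Fintype.equivFin σ
  have hp' : rename e p ≠ 0 := fun h => hp (rename_injective e e.injective (by simpa using h))
  rw [← (measurePreserving_piCongrLeft μ e.symm).map_eq,
    (MeasurableEquiv.piCongrLeft _ _).measurableEmbedding.ae_map_iff]
  filter_upwards [ae_eval_ne_zero_fin _ hp'] with x hx
  convert hx using 1
  rw [eval_rename]
  congr
  funext i
  rw [MeasurableEquiv.coe_piCongrLeft]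
  simpa using Equiv.piCongrLeft_apply_apply (fun _ => ℝ) e.symm x (e i)

theorem ae_eval_matrix_ne_zero {m n : Type*} [Fintype m] [Fintype n] (μ : m → n → Measure ℝ)
    [∀ i j, IsProbabilityMeasure (μ i j)] [∀ i j, NullSingletonClass (μ i j)]
    {p : MvPolynomial (m × n) ℝ} (hp : p ≠ 0) :
    ∀ᵐ S : Matrix m n ℝ ∂Measure.pi fun i => Measure.pi (μ i), eval (fun q => S q.1 q.2) p ≠ 0 := by
  simp_rw [← Measure.infinitePi_eq_pi]
  rw [← Measure.infinitePi_map_curry]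
  refine (MeasurableEquiv.curry m n ℝ).measurableEmbedding.ae_map_iff.2 ?_
  rw [Measure.infinitePi_eq_pi]
  exact ae_eval_ne_zero _ hp

end MvPolynomial

namespace Matrix

open MvPolynomial

theorem det_transpose_mul_self_ne_zero_iff {m n R : Type*} [Fintype m] [Fintype n]
    [DecidableEq n] [Field R] [LinearOrder R] [IsStrictOrderedRing R] {A : Matrix m n R} :
    (Aᵀ * A).det ≠ 0 ↔ Function.Injective A.mulVec := by
  rw [← isUnit_iff_ne_zero, ← isUnit_iff_isUnit_det, ← mulVec_injective_iff_isUnit,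
    ← coe_mulVecLin, ← LinearMap.ker_eq_bot, ker_mulVecLin_transpose_mul_self,
    LinearMap.ker_eq_bot, coe_mulVecLin]

variable {m n : Type*} [Fintype m] [Fintype n] (μ : m → n → Measure ℝ)
  [∀ i j, IsProbabilityMeasure (μ i j)] [∀ i j, NullSingletonClass (μ i j)]

theorem ae_injective_mul_mulVec {k : Type*} [Fintype k] [DecidableEq k] {B : Matrix n k ℝ}
    (hB : Function.Injective B.mulVec) (hk : Fintype.card k ≤ Fintype.card m) :
    ∀ᵐ S : Matrix m n ℝ ∂Measure.pi fun i => Measure.pi (μ i),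
      Function.Injective (S * B).mulVec := by
  set P : Matrix m k (MvPolynomial (m × n) ℝ) :=
    mvPolynomialX m n ℝ * B.map (C : ℝ →+* MvPolynomial (m × n) ℝ) with hPdef
  have heval : ∀ S : Matrix m n ℝ,
      eval (fun q => S q.1 q.2) (Pᵀ * P).det = ((S * B)ᵀ * (S * B)).det := by
    intro S
    have hP : P.map (eval fun q => S q.1 q.2) = S * B := by
      rw [hPdef, Matrix.map_mul, Matrix.map_map]
      congr 1
      · exact mvPolynomialX_map_eval₂ (RingHom.id ℝ) S
      · ext; simp
    rw [RingHom.map_det, RingHom.mapMatrix_apply, Matrix.map_mul, transpose_map, hP]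
  obtain ⟨ρ⟩ := Function.Embedding.nonempty_of_card_le hk
  set E : Matrix m k ℝ := (1 : Matrix m m ℝ).submatrix id ρ with hEdef
  have hE : Eᵀ * E = 1 := by
    rw [hEdef, transpose_submatrix, transpose_one,
      ← submatrix_mul _ _ _ id _ Function.bijective_id, Matrix.mul_one, submatrix_one_embedding]
  -- at `S₀ = E Bᵀ` the Gram matrix of `S₀ B` is `(Bᵀ B)²`
  have hne : (Pᵀ * P).det ≠ 0 := by
    intro h
    have h₀ := heval (E * Bᵀ)
    rw [h, map_zero, Matrix.mul_assoc, transpose_mul, Matrix.mul_assoc, ← Matrix.mul_assoc Eᵀ,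
      hE, Matrix.one_mul, det_mul] at h₀
    exact det_transpose_mul_self_ne_zero_iff.2 hB (by simpa using h₀.symm)
  filter_upwards [ae_eval_matrix_ne_zero μ hne] with S hS
  rwa [heval, det_transpose_mul_self_ne_zero_iff] at hS

theorem ae_injOn_mulVec [DecidableEq n] (W : Submodule ℝ (n → ℝ))
    (hW : Module.finrank ℝ W ≤ Fintype.card m) :
    ∀ᵐ S : Matrix m n ℝ ∂Measure.pi fun i => Measure.pi (μ i), Set.InjOn S.mulVec W := by
  set f := W.subtype ∘ₗ (Module.finBasis ℝ W).equivFun.symm.toLinearMap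
  set B := LinearMap.toMatrix' f
  have hBf : ∀ a, B *ᵥ a = f a := fun a => by rw [← toLin'_apply, toLin'_toMatrix']
  have hW_range : ∀ w ∈ W, ∃ a, B *ᵥ a = w := fun w hw =>
    ⟨(Module.finBasis ℝ W).equivFun ⟨w, hw⟩, by simp [hBf, f]⟩
  have hB : Function.Injective B.mulVec := by
    intro a b hab
    rw [hBf, hBf] at hab
    exact (Module.finBasis ℝ W).equivFun.symm.injective (Subtype.ext hab)
  filter_upwards [ae_injective_mul_mulVec μ hB (by simpa using hW)] with S hS
  intro x hx y hy hxy
  obtain ⟨a, rfl⟩ := hW_range x hx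
  obtain ⟨b, rfl⟩ := hW_range y hy
  rw [mulVec_mulVec, mulVec_mulVec] at hxy
  rw [hS hxy]

end Matrix

theorem finrank_span_insert_image_le {K V ι : Type*} [DivisionRing K] [AddCommGroup V]
    [Module K V] [DecidableEq V] (v : V) (f : ι → V) (T : Finset ι) :
    Module.finrank K (Submodule.span K ((insert v (T.image f) : Finset V) : Set V)) ≤
      T.card + 1 :=
  (finrank_span_finset_le_card _).trans
    ((Finset.card_insert_le _ _).trans (Nat.add_le_add_right Finset.card_image_le 1))

open Matrix Submodule in
theorem gaussian_l0_recovery_succeeds_of_K_lt_L_general (L M N K : ℕ)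
    (hKL : K + 1 ≤ L)
    (Xstar : Matrix (Fin N) (Fin M) ℝ) :
    (Measure.pi fun _ : Fin L => Measure.pi fun _ : Fin N => gaussianReal 0 1)
      {S : Matrix (Fin L) (Fin N) ℝ |
        ¬ ∀ X : Matrix (Fin N) (Fin M) ℝ, S * X = S * Xstar →
            (Finset.univ.filter (fun i => X i ≠ 0)).card ≤ K → X = Xstar} = 0 := by
  have := nullSingletonClass_gaussianReal (μ := 0) one_ne_zero
  set μ := Measure.pi fun _ : Fin L => Measure.pi fun _ : Fin N => gaussianReal 0 1
  let W (T : Finset (Fin N)) (j : Fin M) : Submodule ℝ (Fin N → ℝ) :=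
    span ℝ ↑(insert (Xstar.col j) (T.image (Pi.basisFun ℝ (Fin N))))
  have hW : ∀ᵐ S : Matrix (Fin L) (Fin N) ℝ ∂μ,
      ∀ (T : Finset (Fin N)) (j : Fin M), T.card ≤ K → Set.InjOn S.mulVec (W T j) := by
    refine ae_all_iff.2 fun T => ae_all_iff.2 fun j => Filter.eventually_imp_distrib_left.2
      fun hT => ae_injOn_mulVec (fun _ _ => gaussianReal 0 1) _ ?_
    exact (finrank_span_insert_image_le _ _ _).trans (by simp; omega)
  refine ae_iff.1 ?_
  refine hW.mono fun (S : Matrix (Fin L) (Fin N) ℝ) hS X hSX hX => ?_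
  set T := Finset.univ.filter fun i => X i ≠ 0
  ext i j
  have hX_mem : X.col j ∈ W T j := by
    refine span_mono (by rw [Finset.coe_insert, Finset.coe_image]; exact Set.subset_insert _ _)
      ((Pi.basisFun ℝ (Fin N)).mem_span_image.2 fun i hi => ?_)
    simp only [Finset.mem_coe, Finsupp.mem_support_iff, Pi.basisFun_repr] at hi
    simpa [T] using fun h => hi (by simp [h])
  have hXstar_mem : Xstar.col j ∈ W T j := subset_span (by simp)
  have hcol : S *ᵥ X.col j = S *ᵥ Xstar.col j := by
    rw [← mulVec_single_one, ← mulVec_single_one, mulVec_mulVec, mulVec_mulVec, hSX]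
  exact congrFun (hS T j hX hX_mem hXstar_mem hcol) i

/-- Positive part of Lemma 3 of the paper: if `K + 1 ≤ L ≤ N` and `X*` has exactly `K`
nonzero rows, then for a random Gaussian `L × N` matrix `S`, almost surely every `X` with
`S X = S X*` and at most `K` nonzero rows equals `X*`; hence almost surely `X*` is the
unique minimizer of the number of nonzero rows subject to `S X = S X*`. -/
theorem gaussian_l0_recovery_succeeds_of_K_lt_L (L M N K : ℕ)
    (hKL : K + 1 ≤ L) (hLN : L ≤ N)
    (Xstar : Matrix (Fin N) (Fin M) ℝ)
    (hXstar : (Finset.univ.filter (fun i => Xstar i ≠ 0)).card = K) :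
    (Measure.pi fun _ : Fin L => Measure.pi fun _ : Fin N => gaussianReal 0 1)
      {S : Matrix (Fin L) (Fin N) ℝ |
        ¬ ∀ X : Matrix (Fin N) (Fin M) ℝ, S * X = S * Xstar →
            (Finset.univ.filter (fun i => X i ≠ 0)).card ≤ K → X = Xstar} = 0 :=
  gaussian_l0_recovery_succeeds_of_K_lt_L_general L M N K hKL Xstar
end

section
/- Let L, M, N be natural numbers, let S ∈ ℝ^{L×N}, and suppose that every set of at most L columns of S is linearly independent. Let X* ∈ ℝ^{N×M} have exactly K nonzero rows with support set I_K, where K ≤ L, and set Y = S X*. If X ∈ ℝ^{N×M} satisfies S X = Y and the support set I of X satisfies |I ∪ I_K| ≤ L, then I_K ⊆ I and X agrees with X* on all rows, i.e., X = X*. -/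
open scoped Classical

namespace Matrix

variable {m n o R : Type*} [Fintype n] [CommRing R]

theorem eq_zero_of_mulVec_eq_zero_of_linearIndepOn {A : Matrix m n R} {J : Finset n}
    (hA : LinearIndepOn R Aᵀ (J : Set n)) {v : n → R} (hv : ∀ i ∉ J, v i = 0)
    (hAv : A *ᵥ v = 0) : v = 0 := by
  have hsum : ∑ j : J, v j • Aᵀ j = 0 := by
    rw [Finset.sum_coe_sort J (fun j => v j • Aᵀ j),
      Finset.sum_subset J.subset_univ fun i _ hi => by rw [hv i hi, zero_smul]]
    simpa only [mulVec_eq_sum, op_smul_eq_smul] using hAv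
  funext i
  by_cases hi : i ∈ J
  · exact Fintype.linearIndependent_iff.1 hA (fun j => v j) hsum ⟨i, hi⟩
  · exact hv i hi

theorem eq_zero_of_mul_eq_zero_of_linearIndepOn {A : Matrix m n R} {J : Finset n}
    (hA : LinearIndepOn R Aᵀ (J : Set n)) {D : Matrix n o R} (hD : ∀ i ∉ J, D i = 0)
    (hAD : A * D = 0) : D = 0 := by
  ext i k
  have hcol := eq_zero_of_mulVec_eq_zero_of_linearIndepOn hA (v := fun i => D i k)
    (fun i hi => by simp only [hD i hi, Pi.zero_apply])
    (funext fun l => congr_fun (congr_fun hAD l) k)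
  exact congr_fun hcol i

end Matrix

theorem deterministic_exact_recovery_general (L M N : ℕ)
    (S : Matrix (Fin L) (Fin N) ℝ)
    (hindep : ∀ J : Finset (Fin N), J.card ≤ L →
      LinearIndependent ℝ (fun i : ↥J => S.transpose i.1))
    (Xstar : Matrix (Fin N) (Fin M) ℝ)
    (IK : Finset (Fin N)) (hIK : IK = Finset.univ.filter (fun i => Xstar i ≠ 0))
    (Y : Matrix (Fin L) (Fin M) ℝ) (hY : Y = S * Xstar)
    (X : Matrix (Fin N) (Fin M) ℝ) (hSX : S * X = Y)
    (I : Finset (Fin N)) (hI : I = Finset.univ.filter (fun i => X i ≠ 0))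
    (hcard : (I ∪ IK).card ≤ L) :
    IK ⊆ I ∧ X = Xstar := by
  have hdiff_rows : ∀ i ∉ I ∪ IK, (X - Xstar) i = 0 := by
    intro i hi
    simp only [hI, hIK, Finset.mem_union, Finset.mem_filter, Finset.mem_univ, true_and, not_or,
      not_not] at hi
    show X i - Xstar i = 0
    rw [hi.1, hi.2, sub_zero]
  have hdiff : X - Xstar = 0 :=
    Matrix.eq_zero_of_mul_eq_zero_of_linearIndepOn (hindep _ hcard) hdiff_rows
      (by rw [Matrix.mul_sub, hSX, hY, sub_self])
  obtain rfl : X = Xstar := sub_eq_zero.1 hdiff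
  exact ⟨by rw [hI, hIK], rfl⟩

/-- Deterministic exact-recovery statement from the proof of Lemma 3 of the paper: if every
set of at most `L` columns of `S` is linearly independent, `X*` has exactly `K ≤ L` nonzero
rows with support `I_K`, `Y = S X*`, and `X` satisfies `S X = Y` with support `I` such that
`|I ∪ I_K| ≤ L`, then `I_K ⊆ I` and `X = X*`. -/
theorem deterministic_exact_recovery (L M N K : ℕ)
    (S : Matrix (Fin L) (Fin N) ℝ)
    (hindep : ∀ J : Finset (Fin N), J.card ≤ L →
      LinearIndependent ℝ (fun i : ↥J => S.transpose i.1))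
    (Xstar : Matrix (Fin N) (Fin M) ℝ)
    (IK : Finset (Fin N)) (hIK : IK = Finset.univ.filter (fun i => Xstar i ≠ 0))
    (hIKcard : IK.card = K) (hKL : K ≤ L)
    (Y : Matrix (Fin L) (Fin M) ℝ) (hY : Y = S * Xstar)
    (X : Matrix (Fin N) (Fin M) ℝ) (hSX : S * X = Y)
    (I : Finset (Fin N)) (hI : I = Finset.univ.filter (fun i => X i ≠ 0))
    (hcard : (I ∪ IK).card ≤ L) :
    IK ⊆ I ∧ X = Xstar :=
  deterministic_exact_recovery_general L M N S hindep Xstar IK hIK Y hY X hSX I hI hcard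
end
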